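/- (Theorem 1, lost-opportunity-cost form.) Under the hypotheses of Theorem 1 — two ESRs i and j with feasible dispatches, an interval t* at which their bid-in marginal costs are pairwise distinct across ESRs, both ESRs marginal at t*, and both ESRs' SOC strictly inside its bounds from t* to T — for every uniform price vector π ∈ ℝᵀ, LOCⁱ(π) + LOCʲ(π) > 0, where LOCᵏ(π) = Qᵏ(π) − Πᵏ(gᴰ,ᵏ,gᶜ,ᵏ) and Qᵏ(π) is the maximum of ESR k's profit over its feasible set. That is, under every uniform price at least one of the two ESRs has strictly positive lost opportunity cost. -/

import Mathlib

open Finset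

/-- The state of charge in the previous interval: `e₀` for the first interval,
`e (t-1)` otherwise. -/
noncomputable def socPrev {T : ℕ} (e0 : ℝ) (e : Fin T → ℝ) (t : Fin T) : ℝ :=
  if _ : 0 < t.val then e ⟨t.val - 1, lt_of_le_of_lt (Nat.sub_le _ _) t.isLt⟩ else e0

/-- Feasibility of an ESR schedule `(pD, pC, e)`. -/
def Feasible {T : ℕ} (gDbar gCbar Elo Ehi e0 xiD xiC : ℝ)
    (pD pC e : Fin T → ℝ) : Prop :=
  ∀ t : Fin T,
    e t = socPrev e0 e t + xiC * pC t - pD t / xiD ∧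
    Elo ≤ e t ∧ e t ≤ Ehi ∧
    0 ≤ pD t ∧ pD t ≤ gDbar ∧ 0 ≤ pC t ∧ pC t ≤ gCbar

/-- The set of feasible ESR schedules as a subset of ℝᵀ × ℝᵀ × ℝᵀ. -/
def FeasSet (T : ℕ) (gDbar gCbar Elo Ehi e0 xiD xiC : ℝ) :
    Set ((Fin T → ℝ) × (Fin T → ℝ) × (Fin T → ℝ)) :=
  {x | Feasible gDbar gCbar Elo Ehi e0 xiD xiC x.1 x.2.1 x.2.2}

/-- Profit of a schedule under the uniform price `π`. -/
noncomputable def profit {T : ℕ} (π a b pD pC : Fin T → ℝ) : ℝ :=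
  ∑ t, ((π t - a t) * pD t + (b t - π t) * pC t)

/-!
If both lost opportunity costs vanished, both dispatches would be profit-maximising. Shifting a
marginal dispatch at `t*` by `ε` and compensating the state of charge from `t*` onwards keeps the
schedule feasible for all small `ε` of either sign, because the state of charge stays strictly
inside its bounds there. The profit is affine in `ε` with slope `π t* - a t*` (discharging) or
`b t* - π t*` (charging), so by Fermat's theorem the price at `t*` equals a bid of each ESR,
contradicting that the bids of the two ESRs at `t*` are pairwise distinct.
-/

open Filter Topology

lemma socPrev_add_step {T : ℕ} (e0 c : ℝ) (e : Fin T → ℝ) (s t : Fin T) :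
    socPrev e0 (e + fun u => if s ≤ u then c else 0) t
      = socPrev e0 e t + if s < t then c else 0 := by
  unfold socPrev
  by_cases ht : 0 < t.val
  · have hprev : s ≤ ⟨t.val - 1, lt_of_le_of_lt (Nat.sub_le _ _) t.isLt⟩ ↔ s < t := by
      simp only [Fin.le_def, Fin.lt_def]; omega
    simp only [dif_pos ht, Pi.add_apply, hprev]
  · have hst : ¬ s < t := fun h => ht (Nat.zero_le _ |>.trans_lt h)
    simp only [dif_neg ht, hst, if_false, add_zero]

lemma profit_add {T : ℕ} (π a b pD pC pD' pC' : Fin T → ℝ) :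
    profit π a b (pD + pD') (pC + pC') = profit π a b pD pC + profit π a b pD' pC' := by
  simp only [profit, Pi.add_apply, ← Finset.sum_add_distrib]
  exact Finset.sum_congr rfl fun _ _ => by ring

lemma profit_single {T : ℕ} (π a b : Fin T → ℝ) (s : Fin T) (δ γ : ℝ) :
    profit π a b (Pi.single s δ) (Pi.single s γ) = (π s - a s) * δ + (b s - π s) * γ := by
  rw [profit, Fintype.sum_eq_single s fun t ht => by simp [ht]]
  simp

lemma eventually_add_mem_Icc {x a b : ℝ} (hx : x ∈ Set.Ioo a b) :
    ∀ᶠ c in 𝓝 (0 : ℝ), x + c ∈ Set.Icc a b :=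
  (continuous_const_add x).tendsto' 0 x (add_zero x) |>.eventually (Icc_mem_nhds hx.1 hx.2)

section Perturbation

variable {T : ℕ} {gDbar gCbar Elo Ehi e0 xiD xiC : ℝ} {π a b pD pC e : Fin T → ℝ} {s : Fin T}

theorem Feasible.add_single (hfeas : Feasible gDbar gCbar Elo Ehi e0 xiD xiC pD pC e) {δ γ : ℝ}
    (hD : pD s + δ ∈ Set.Icc 0 gDbar) (hC : pC s + γ ∈ Set.Icc 0 gCbar)
    (hE : ∀ t, s ≤ t → e t + (xiC * γ - δ / xiD) ∈ Set.Icc Elo Ehi) :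
    Feasible gDbar gCbar Elo Ehi e0 xiD xiC (pD + Pi.single s δ) (pC + Pi.single s γ)
      (e + fun t => if s ≤ t then xiC * γ - δ / xiD else 0) := by
  intro t
  obtain ⟨heq, hlo, hhi, hD0, hD1, hC0, hC1⟩ := hfeas t
  simp only [Pi.add_apply]
  rw [socPrev_add_step]
  rcases eq_or_ne t s with rfl | hts
  · simp only [Pi.single_eq_same, le_refl, lt_irrefl, if_true, if_false]
    exact ⟨by rw [heq]; ring, (hE t le_rfl).1, (hE t le_rfl).2, hD.1, hD.2, hC.1, hC.2⟩
  · have hstep : (s ≤ t) ↔ (s < t) := ⟨fun h => lt_of_le_of_ne h hts.symm, le_of_lt⟩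
    simp only [Pi.single_eq_of_ne hts, add_zero, hstep]
    by_cases hst : s < t
    · simp only [hst, if_true]
      exact ⟨by rw [heq]; ring, (hE t hst.le).1, (hE t hst.le).2, hD0, hD1, hC0, hC1⟩
    · simp only [hst, if_false, add_zero]
      exact ⟨heq, hlo, hhi, hD0, hD1, hC0, hC1⟩

lemma eventually_forall_add_mem_Icc (hsoc : ∀ t, s ≤ t → Elo < e t ∧ e t < Ehi) :
    ∀ᶠ c in 𝓝 (0 : ℝ), ∀ t, s ≤ t → e t + c ∈ Set.Icc Elo Ehi := by
  refine eventually_all.2 fun t => ?_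
  by_cases hst : s ≤ t
  · exact (eventually_add_mem_Icc (hsoc t hst)).mono fun _ h _ => h
  · exact Eventually.of_forall fun _ h => absurd h hst

theorem IsMaxOn.profit_slope_eq_zero
    (hmax : IsMaxOn (fun x => profit π a b x.1 x.2.1) (FeasSet T gDbar gCbar Elo Ehi e0 xiD xiC)
      (pD, pC, e))
    (hfeas : Feasible gDbar gCbar Elo Ehi e0 xiD xiC pD pC e)
    (hsoc : ∀ t, s ≤ t → Elo < e t ∧ e t < Ehi) (dD dC : ℝ)
    (hD : ∀ᶠ ε in 𝓝 (0 : ℝ), pD s + ε * dD ∈ Set.Icc 0 gDbar)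
    (hC : ∀ᶠ ε in 𝓝 (0 : ℝ), pC s + ε * dC ∈ Set.Icc 0 gCbar) :
    (π s - a s) * dD + (b s - π s) * dC = 0 := by
  set k := (π s - a s) * dD + (b s - π s) * dC
  have hshift : Tendsto (fun ε : ℝ => xiC * (ε * dC) - ε * dD / xiD) (𝓝 0) (𝓝 0) :=
    (by fun_prop : Continuous _).tendsto' 0 0 (by simp)
  have hlocal : IsLocalMax (fun ε : ℝ => profit π a b pD pC + ε * k) 0 := by
    filter_upwards [hD, hC, hshift.eventually (eventually_forall_add_mem_Icc hsoc)]
      with ε hεD hεC hεE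
    have hle := isMaxOn_iff.1 hmax (_, _, _) (hfeas.add_single hεD hεC hεE)
    rw [profit_add, profit_single] at hle
    linarith
  have hderiv : HasDerivAt (fun ε : ℝ => profit π a b pD pC + ε * k) k 0 := by
    simpa using ((hasDerivAt_id (0 : ℝ)).mul_const k).const_add (profit π a b pD pC)
  exact hlocal.hasDerivAt_eq_zero hderiv

theorem IsMaxOn.price_eq_of_marginal
    (hmax : IsMaxOn (fun x => profit π a b x.1 x.2.1) (FeasSet T gDbar gCbar Elo Ehi e0 xiD xiC)
      (pD, pC, e))
    (hfeas : Feasible gDbar gCbar Elo Ehi e0 xiD xiC pD pC e)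
    (hsoc : ∀ t, s ≤ t → Elo < e t ∧ e t < Ehi)
    (hmarg : (0 < pD s ∧ pD s < gDbar) ∨ (0 < pC s ∧ pC s < gCbar)) :
    π s = a s ∨ π s = b s := by
  obtain ⟨-, -, -, hD0, hD1, hC0, hC1⟩ := hfeas s
  rcases hmarg with hD | hC
  · have h := hmax.profit_slope_eq_zero hfeas hsoc 1 0
      (by simpa using eventually_add_mem_Icc hD) (by simpa using ⟨hC0, hC1⟩)
    left; linarith
  · have h := hmax.profit_slope_eq_zero hfeas hsoc 0 1
      (by simpa using ⟨hD0, hD1⟩) (by simpa using eventually_add_mem_Icc hC)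
    right; linarith

end Perturbation

lemma isMaxOn_of_isGreatest_image {α : Type*} {f : α → ℝ} {S : Set α} {Q : ℝ} {x : α}
    (hQ : IsGreatest (f '' S) Q) (hx : Q ≤ f x) : IsMaxOn f S x :=
  isMaxOn_iff.2 fun _ hy => (hQ.2 (Set.mem_image_of_mem f hy)).trans hx

theorem sum_of_LOC_positive_under_uniform_price_general
    (T : ℕ)
    -- ESR i parameters
    (gDbari gCbari Eloi Ehii e0i xiDi xiCi : ℝ)
    -- ESR j parameters
    (gDbarj gCbarj Eloj Ehij e0j xiDj xiCj : ℝ)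
    -- bid-in marginal costs
    (ai bi aj bj : Fin T → ℝ)
    -- dispatches (feasible schedules)
    (gDi gCi ei gDj gCj ej : Fin T → ℝ)
    (hfeasi : Feasible gDbari gCbari Eloi Ehii e0i xiDi xiCi gDi gCi ei)
    (hfeasj : Feasible gDbarj gCbarj Eloj Ehij e0j xiDj xiCj gDj gCj ej)
    (tstar : Fin T)
    -- (1) distinct bid-in marginal costs at t*
    (hdist1 : ai tstar ≠ aj tstar) (hdist2 : ai tstar ≠ bj tstar)
    (hdist3 : bi tstar ≠ aj tstar) (hdist4 : bi tstar ≠ bj tstar)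
    -- (2) both ESRs are marginal at t*
    (hmargi : (0 < gDi tstar ∧ gDi tstar < gDbari) ∨ (0 < gCi tstar ∧ gCi tstar < gCbari))
    (hmargj : (0 < gDj tstar ∧ gDj tstar < gDbarj) ∨ (0 < gCj tstar ∧ gCj tstar < gCbarj))
    -- (3) SOC strictly inside its bounds from t* to the end of the horizon
    (hsoci : ∀ t : Fin T, tstar ≤ t → Eloi < ei t ∧ ei t < Ehii)
    (hsocj : ∀ t : Fin T, tstar ≤ t → Eloj < ej t ∧ ej t < Ehij) :
    ∀ π : Fin T → ℝ, ∀ Qi Qj : ℝ,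
      IsGreatest ((fun x => profit π ai bi x.1 x.2.1) ''
        FeasSet T gDbari gCbari Eloi Ehii e0i xiDi xiCi) Qi →
      IsGreatest ((fun x => profit π aj bj x.1 x.2.1) ''
        FeasSet T gDbarj gCbarj Eloj Ehij e0j xiDj xiCj) Qj →
      0 < (Qi - profit π ai bi gDi gCi) + (Qj - profit π aj bj gDj gCj) := by
  intro π Qi Qj hQi hQj
  have hLOCi_nonneg : profit π ai bi gDi gCi ≤ Qi := hQi.2 ⟨(gDi, gCi, ei), hfeasi, rfl⟩
  have hLOCj_nonneg : profit π aj bj gDj gCj ≤ Qj := hQj.2 ⟨(gDj, gCj, ej), hfeasj, rfl⟩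
  by_contra! hnonpos
  have hpricei := (isMaxOn_of_isGreatest_image hQi (by linarith)).price_eq_of_marginal
    hfeasi hsoci hmargi
  have hpricej := (isMaxOn_of_isGreatest_image hQj (by linarith)).price_eq_of_marginal
    hfeasj hsocj hmargj
  rcases hpricei with hi | hi <;> rcases hpricej with hj | hj
  exacts [hdist1 (hi.symm.trans hj), hdist2 (hi.symm.trans hj),
    hdist3 (hi.symm.trans hj), hdist4 (hi.symm.trans hj)]

/-- Theorem 1, LOC form: under the hypotheses of Theorem 1, for every
uniform price `π`, if `Qⁱ` and `Qʲ` are the maxima of the two ESRs' profits over their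
feasible sets, then `LOCⁱ(π) + LOCʲ(π) > 0`, i.e. at least one ESR has strictly positive
lost opportunity cost. -/
theorem sum_of_LOC_positive_under_uniform_price
    (T : ℕ) (hT : 1 ≤ T)
    -- ESR i parameters
    (gDbari gCbari Eloi Ehii e0i xiDi xiCi : ℝ)
    (hgDi : 0 < gDbari) (hgCi : 0 < gCbari) (hEi : Eloi ≤ Ehii)
    (he0il : Eloi ≤ e0i) (he0iu : e0i ≤ Ehii)
    (hxiDi0 : 0 < xiDi) (hxiDi1 : xiDi ≤ 1) (hxiCi0 : 0 < xiCi) (hxiCi1 : xiCi ≤ 1)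
    -- ESR j parameters
    (gDbarj gCbarj Eloj Ehij e0j xiDj xiCj : ℝ)
    (hgDj : 0 < gDbarj) (hgCj : 0 < gCbarj) (hEj : Eloj ≤ Ehij)
    (he0jl : Eloj ≤ e0j) (he0ju : e0j ≤ Ehij)
    (hxiDj0 : 0 < xiDj) (hxiDj1 : xiDj ≤ 1) (hxiCj0 : 0 < xiCj) (hxiCj1 : xiCj ≤ 1)
    -- bid-in marginal costs
    (ai bi aj bj : Fin T → ℝ)
    -- dispatches (feasible schedules)
    (gDi gCi ei gDj gCj ej : Fin T → ℝ)
    (hfeasi : Feasible gDbari gCbari Eloi Ehii e0i xiDi xiCi gDi gCi ei)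
    (hfeasj : Feasible gDbarj gCbarj Eloj Ehij e0j xiDj xiCj gDj gCj ej)
    (tstar : Fin T)
    -- (1) distinct bid-in marginal costs at t*
    (hdist1 : ai tstar ≠ aj tstar) (hdist2 : ai tstar ≠ bj tstar)
    (hdist3 : bi tstar ≠ aj tstar) (hdist4 : bi tstar ≠ bj tstar)
    -- (2) both ESRs are marginal at t*
    (hmargi : (0 < gDi tstar ∧ gDi tstar < gDbari) ∨ (0 < gCi tstar ∧ gCi tstar < gCbari))
    (hmargj : (0 < gDj tstar ∧ gDj tstar < gDbarj) ∨ (0 < gCj tstar ∧ gCj tstar < gCbarj))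
    -- (3) SOC strictly inside its bounds from t* to the end of the horizon
    (hsoci : ∀ t : Fin T, tstar ≤ t → Eloi < ei t ∧ ei t < Ehii)
    (hsocj : ∀ t : Fin T, tstar ≤ t → Eloj < ej t ∧ ej t < Ehij) :
    ∀ π : Fin T → ℝ, ∀ Qi Qj : ℝ,
      IsGreatest ((fun x => profit π ai bi x.1 x.2.1) ''
        FeasSet T gDbari gCbari Eloi Ehii e0i xiDi xiCi) Qi →
      IsGreatest ((fun x => profit π aj bj x.1 x.2.1) ''
        FeasSet T gDbarj gCbarj Eloj Ehij e0j xiDj xiCj) Qj →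
      0 < (Qi - profit π ai bi gDi gCi) + (Qj - profit π aj bj gDj gCj) :=
  sum_of_LOC_positive_under_uniform_price_general T gDbari gCbari Eloi Ehii e0i xiDi xiCi gDbarj
    gCbarj Eloj Ehij e0j xiDj xiCj ai bi aj bj gDi gCi ei gDj gCj ej hfeasi hfeasj tstar hdist1
    hdist2 hdist3 hdist4 hmargi hmargj hsoci hsocj
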